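/- Let K(A,B) be a complete bipartite graph whose edges are colored with two colors, blue and green, such that K(A,B) has a vertex x all of whose incident edges are blue and K(A,B) is not an S-type graph. Then K(A,B) has a blue spanning tree. -/

import Mathlib

/-!
Common definitions for edge-colored complete bipartite graphs.

The complete bipartite graph `K(A,B)` with partite sets `α` and `β` is modeled on the
vertex type `α ⊕ β`; an edge-coloring with color type `γ` is a function `c : α → β → γ`
(giving the color of the edge between `a : α` and `b : β`).
-/

/-- The spanning subgraph of the complete bipartite graph on parts `α`, `β` consisting of
the edges of color `k`, under the edge-coloring `c`. -/
def biColorGraph {α β γ : Type*} (c : α → β → γ) (k : γ) : SimpleGraph (α ⊕ β) where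
  Adj x y := (∃ a b, x = Sum.inl a ∧ y = Sum.inr b ∧ c a b = k) ∨
             (∃ a b, x = Sum.inr b ∧ y = Sum.inl a ∧ c a b = k)
  symm := by
    constructor
    rintro x y (⟨a, b, hx, hy, hc⟩ | ⟨a, b, hx, hy, hc⟩)
    · exact Or.inr ⟨a, b, hy, hx, hc⟩
    · exact Or.inl ⟨a, b, hy, hx, hc⟩
  loopless := by
    constructor
    rintro x (⟨a, b, hx, hy, _⟩ | ⟨a, b, hx, hy, _⟩) <;> subst hx <;> simp at hy

/-- `S` is the vertex set of a monochromatic tree: it induces a connected subgraph in some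
color class.  (A single vertex also counts as a monochromatic tree.) -/
def IsMonoTreeSet {α β γ : Type*} (c : α → β → γ) (S : Set (α ⊕ β)) : Prop :=
  ∃ k, ((biColorGraph c k).induce S).Connected

/-- `P` is a partition of the vertex set of the complete bipartite graph into
(nonempty, pairwise vertex-disjoint) vertex sets of monochromatic trees. -/
def IsMonoTreePartition {α β γ : Type*} (c : α → β → γ) (P : Finset (Set (α ⊕ β))) : Prop :=
  (∀ S ∈ P, IsMonoTreeSet c S) ∧ ∀ x : α ⊕ β, ∃! S, S ∈ P ∧ x ∈ S

/-- The vertex set can be partitioned into at most `m` vertex-disjoint monochromatic trees. -/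
def HasMonoTreePartition {α β γ : Type*} (c : α → β → γ) (m : ℕ) : Prop :=
  ∃ P : Finset (Set (α ⊕ β)), IsMonoTreePartition c P ∧ P.card ≤ m

/-- Every vertex has color degree 3, i.e. all three colors appear on its incident edges. -/
def ColorDegreeThree {α β : Type*} (c : α → β → Fin 3) : Prop :=
  (∀ (a : α) (k : Fin 3), ∃ b, c a b = k) ∧ ∀ (b : β) (k : Fin 3), ∃ a, c a b = k

/-! For 2-edge-colorings we use `Bool` as the color type: `true` = blue, `false` = green. -/

/-- The vertices of `α` all of whose incident edges are blue. -/
def XA {α β : Type*} (c : α → β → Bool) : Set α := {a | ∀ b, c a b = true}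

/-- The vertices of `α` all of whose incident edges are green. -/
def YA {α β : Type*} (c : α → β → Bool) : Set α := {a | ∀ b, c a b = false}

/-- The vertices of `β` all of whose incident edges are blue. -/
def XB {α β : Type*} (c : α → β → Bool) : Set β := {b | ∀ a, c a b = true}

/-- The vertices of `β` all of whose incident edges are green. -/
def YB {α β : Type*} (c : α → β → Bool) : Set β := {b | ∀ a, c a b = false}

/-- `S`-type graph: `X(G) ≠ ∅` and `Y(G) ≠ ∅`. -/
def IsSType {α β : Type*} (c : α → β → Bool) : Prop :=
  ((XA c).Nonempty ∨ (XB c).Nonempty) ∧ ((YA c).Nonempty ∨ (YB c).Nonempty)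

/-- `M`-type graph: there are partitions `A = A1 ∪ A1ᶜ`, `B = B1 ∪ B1ᶜ` with all four parts
nonempty such that `K(A1,B1)` and `K(A1ᶜ,B1ᶜ)` are blue and `K(A1,B1ᶜ)`, `K(A1ᶜ,B1)`
are green. -/
def IsMType {α β : Type*} (c : α → β → Bool) : Prop :=
  ∃ (A1 : Set α) (B1 : Set β),
    A1.Nonempty ∧ A1ᶜ.Nonempty ∧ B1.Nonempty ∧ B1ᶜ.Nonempty ∧
    (∀ a ∈ A1, ∀ b ∈ B1, c a b = true) ∧
    (∀ a ∈ A1ᶜ, ∀ b ∈ B1ᶜ, c a b = true) ∧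
    (∀ a ∈ A1, ∀ b ∈ B1ᶜ, c a b = false) ∧
    (∀ a ∈ A1ᶜ, ∀ b ∈ B1, c a b = false)

/-- For a subset `Bi ⊆ B`, the set `b(Bi) ⊆ A` of vertices sending blue edges to all of `Bi`
and green edges to all of `Biᶜ`.  (Thus `b(B̄i) = bsetA c Biᶜ`.) -/
def bsetA {α β : Type*} (c : α → β → Bool) (Bi : Set β) : Set α :=
  {a | (∀ b ∈ Bi, c a b = true) ∧ ∀ b ∈ Biᶜ, c a b = false}

/-- For a subset `Ai ⊆ A`, the set `b(Ai) ⊆ B` of vertices sending blue edges to all of `Ai`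
and green edges to all of `Aiᶜ`. -/
def bsetB {α β : Type*} (c : α → β → Bool) (Ai : Set α) : Set β :=
  {b | (∀ a ∈ Ai, c a b = true) ∧ ∀ a ∈ Aiᶜ, c a b = false}

/-- `S1*`-type graph with `X(G) ∪ Y(G) ⊆ A`: `|B| = 1`, `|A1| ≥ 2` and `|A3| ≥ 2`
(where `A1 = X(G)`, `A3 = Y(G)`). -/
def IsS1StarA {α β : Type*} [Fintype β] (c : α → β → Bool) : Prop :=
  Fintype.card β = 1 ∧ 2 ≤ (XA c).ncard ∧ 2 ≤ (YA c).ncard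

/-- `S1'`-type graph with `X(G) ∪ Y(G) ⊆ A`: `|A1| ≥ 2`, `|A3| ≥ 2`, `|B| ≥ 2`, and for
every partition `B = Bi ∪ B̄i` into nonempty parts, `b(Bi) ≠ ∅` and `b(B̄i) ≠ ∅`. -/
def IsS1PrimeA {α β : Type*} [Fintype β] (c : α → β → Bool) : Prop :=
  2 ≤ (XA c).ncard ∧ 2 ≤ (YA c).ncard ∧ 2 ≤ Fintype.card β ∧
  ∀ Bi : Set β, Bi.Nonempty → Biᶜ.Nonempty →
    (bsetA c Bi).Nonempty ∧ (bsetA c Biᶜ).Nonempty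

/-- `S1*`-type graph with `X(G) ∪ Y(G) ⊆ B`. -/
def IsS1StarB {α β : Type*} [Fintype α] (c : α → β → Bool) : Prop :=
  Fintype.card α = 1 ∧ 2 ≤ (XB c).ncard ∧ 2 ≤ (YB c).ncard

/-- `S1'`-type graph with `X(G) ∪ Y(G) ⊆ B`. -/
def IsS1PrimeB {α β : Type*} [Fintype α] (c : α → β → Bool) : Prop :=
  2 ≤ (XB c).ncard ∧ 2 ≤ (YB c).ncard ∧ 2 ≤ Fintype.card α ∧
  ∀ Ai : Set α, Ai.Nonempty → Aiᶜ.Nonempty →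
    (bsetB c Ai).Nonempty ∧ (bsetB c Aiᶜ).Nonempty

/-- `S1`-type graph: `S1*`-type or `S1'`-type. -/
def IsS1 {α β : Type*} [Fintype α] [Fintype β] (c : α → β → Bool) : Prop :=
  IsS1StarA c ∨ IsS1PrimeA c ∨ IsS1StarB c ∨ IsS1PrimeB c

/-- `S2`-type graph: an `S`-type graph that is not `S1`-type. -/
def IsS2 {α β : Type*} [Fintype α] [Fintype β] (c : α → β → Bool) : Prop :=
  IsSType c ∧ ¬ IsS1 c


/-! If `x` is joined in blue to the whole opposite side, every vertex of that side is one blue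
edge away from `x`, and every vertex of `x`'s own side having some blue edge is two blue edges
away. As `X(G) ≠ ∅` and the graph is not `S`-type, `Y(G) = ∅`: every vertex has a blue edge. -/

open SimpleGraph

section biColorGraph

variable {α β γ : Type*} (c : α → β → γ) (k : γ)

@[simp]
theorem biColorGraph_adj_inl_inr {a : α} {b : β} :
    (biColorGraph c k).Adj (Sum.inl a) (Sum.inr b) ↔ c a b = k := by
  simp [biColorGraph]

@[simp]
theorem biColorGraph_adj_inr_inl {a : α} {b : β} :
    (biColorGraph c k).Adj (Sum.inr b) (Sum.inl a) ↔ c a b = k := by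
  simp [biColorGraph]

def biColorGraphSwapIso : biColorGraph (Function.swap c) k ≃g biColorGraph c k where
  toEquiv := Equiv.sumComm β α
  map_rel_iff' := by
    rintro (b | a) (b' | a') <;> simp [biColorGraph]

variable {c k}

theorem biColorGraph_connected_of_inl {a₀ : α} (ha₀ : ∀ b, c a₀ b = k)
    (hα : ∀ a, ∃ b, c a b = k) : (biColorGraph c k).Connected := by
  have reach_inr (b : β) : (biColorGraph c k).Reachable (Sum.inl a₀) (Sum.inr b) :=
    ((biColorGraph_adj_inl_inr c k).2 (ha₀ b)).reachable
  refine (connected_iff_exists_forall_reachable _).2 ⟨Sum.inl a₀, ?_⟩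
  rintro (a | b)
  · obtain ⟨b, hb⟩ := hα a
    exact (reach_inr b).trans ((biColorGraph_adj_inr_inl c k).2 hb).reachable
  · exact reach_inr b

theorem biColorGraph_connected_of_inr {b₀ : β} (hb₀ : ∀ a, c a b₀ = k)
    (hβ : ∀ b, ∃ a, c a b = k) : (biColorGraph c k).Connected :=
  (biColorGraphSwapIso c k).connected_iff.1 (biColorGraph_connected_of_inl hb₀ hβ)

end biColorGraph

theorem forall_exists_blue_of_not_isSType {α β : Type*} {c : α → β → Bool} (hS : ¬ IsSType c)
    (hX : (XA c).Nonempty ∨ (XB c).Nonempty) :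
    (∀ a, ∃ b, c a b = true) ∧ ∀ b, ∃ a, c a b = true := by
  by_contra h
  simp only [not_and_or, not_forall, not_exists, Bool.not_eq_true] at h
  exact hS ⟨hX, h⟩

theorem blue_star_not_S_blue_spanning_tree_general {α β : Type*}
    (c : α → β → Bool)
    (hx : (∃ a, ∀ b, c a b = true) ∨ (∃ b, ∀ a, c a b = true))
    (hS : ¬ IsSType c) :
    (biColorGraph c true).Connected := by
  obtain ⟨hα, hβ⟩ := forall_exists_blue_of_not_isSType hS hx
  rcases hx with ⟨a₀, ha₀⟩ | ⟨b₀, hb₀⟩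
  · exact biColorGraph_connected_of_inl ha₀ hα
  · exact biColorGraph_connected_of_inr hb₀ hβ

/-- If a 2-edge-colored complete bipartite graph has a vertex all of
whose incident edges are blue and is not an `S`-type graph, then it has a blue spanning
tree. -/
theorem blue_star_not_S_blue_spanning_tree {α β : Type*} [Fintype α] [Fintype β]
    (c : α → β → Bool)
    (hx : (∃ a, ∀ b, c a b = true) ∨ (∃ b, ∀ a, c a b = true))
    (hS : ¬ IsSType c) :
    (biColorGraph c true).Connected :=
  blue_star_not_S_blue_spanning_tree_general c hx hS
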